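/- arXiv:1301.0394 — 5 statements merged into one kernel-verified Lean document; each statement's English description precedes it below -/
import Mathlib

section
/- Let k be a positive integer and a, b complex numbers with b ≠ 0 and a ≠ b. Suppose g is a nonconstant entire function of order at most one such that g^{(k)} never equals b, and g(z) = 0 if and only if g^{(k)}(z) = a. Then no such g exists (i.e., the hypotheses are contradictory). -/
/-!
An entire function of order less than two that omits a value `c` is `c + A e^{vz}`: writing
`f - c = e^h`, the growth bound controls `Re h` from above, Borel–Carathéodory turns this into
`|h z| = O(|z|^ρ)`, and Cauchy's estimate for `h''` on large circles shows that `h` is affine.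

If `g` has no zero, then `g = A e^{vz}` with `A, v ≠ 0`, and `g^{(k)} = A v^k e^{vz}` takes the
value `b`. Otherwise `g^{(k)}` omits `b`, so `g^{(k)} = b + c e^{vz}`. For `v = 0` it is the
constant `a`, so `g ≡ 0`. For `v ≠ 0`, `Φ = g - c v^{-k} e^{vz}` has `Φ^{(k)} = b`, so it is a
nonconstant polynomial; but `g^{(k)} = a`, hence `g = 0`, on the infinite set
`z₀ + (2πi / v) ℕ`, where `Φ` is therefore constant.
-/

open Complex Metric Filter Topology Polynomial

namespace Complex

theorem _root_.Differentiable.exists_polynomial_of_iteratedDeriv_succ_eq_zero {f : ℂ → ℂ}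
    (hf : Differentiable ℂ f) {n : ℕ} (hn : iteratedDeriv (n + 1) f = 0) :
    ∃ P : ℂ[X], P.natDegree ≤ n ∧ ∀ z, f z = P.eval z := by
  have hvanish : ∀ m ∉ Finset.range (n + 1), iteratedDeriv m f 0 = 0 := by
    intro m hm
    obtain ⟨j, rfl⟩ := Nat.exists_eq_add_of_le (not_lt.mp (Finset.mem_range.not.mp hm))
    rw [iteratedDeriv_eq_iterate, add_comm, Function.iterate_add_apply,
      ← iteratedDeriv_eq_iterate (n := n + 1), hn, iteratedDeriv_eq_iterate.symm,
      iteratedDeriv_const_zero]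
  refine ⟨∑ i ∈ Finset.range (n + 1), C ((i.factorial : ℂ)⁻¹ * iteratedDeriv i f 0) * X ^ i,
    natDegree_sum_le_of_forall_le _ _ fun i hi => ?_, fun z => ?_⟩
  · exact (natDegree_C_mul_X_pow_le _ _).trans (Nat.lt_succ_iff.mp (Finset.mem_range.mp hi))
  · rw [← taylorSeries_eq_of_entire' 0 z hf,
      tsum_eq_sum (s := Finset.range (n + 1)) fun m hm => by simp [hvanish m hm]]
    simp [eval_finsetSum]

theorem _root_.Differentiable.exists_eq_exp_of_ne_zero {f : ℂ → ℂ} (hf : Differentiable ℂ f)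
    (hf₀ : ∀ z, f z ≠ 0) : ∃ h : ℂ → ℂ, Differentiable ℂ h ∧ ∀ z, f z = exp (h z) := by
  obtain ⟨h, hh₀, hh⟩ := ((hf.deriv.div hf hf₀).isExactOn_univ).with_val_at 0 (log (f 0))
  have hh' : ∀ z, HasDerivAt h (deriv f z / f z) z := fun z => hh z (Set.mem_univ z)
  have hquot : ∀ z, HasDerivAt (fun w => f w * exp (-h w)) 0 z := by
    intro z
    refine ((hf z).hasDerivAt.mul (hh' z).neg.cexp).congr_deriv ?_
    simp only [Pi.neg_apply]
    field_simp [hf₀ z]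
    ring
  refine ⟨h, fun z => (hh' z).differentiableAt, fun z => ?_⟩
  have hconst := is_const_of_deriv_eq_zero (fun w => (hquot w).differentiableAt)
    (fun w => (hquot w).deriv) z 0
  rw [hh₀, exp_neg, exp_neg, exp_log (hf₀ 0), mul_inv_cancel₀ (hf₀ 0), ← div_eq_mul_inv,
    div_eq_one_iff_eq (exp_ne_zero _)] at hconst
  exact hconst

theorem norm_deriv_le_exp_of_norm_le_exp {f : ℂ → ℂ} (hf : Differentiable ℂ f) {A B ρ : ℝ}
    (hB : 0 ≤ B) (hρ : 0 ≤ ρ) (hbound : ∀ z, ‖f z‖ ≤ Real.exp (A + B * (1 + ‖z‖) ^ ρ))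
    (z : ℂ) :
    ‖deriv f z‖ ≤ Real.exp (A + 2 ^ ρ * B * (1 + ‖z‖) ^ ρ) := by
  refine div_one (Real.exp _) ▸ norm_deriv_le_of_forall_mem_sphere_norm_le one_pos
    hf.diffContOnCl fun w hw => (hbound w).trans (Real.exp_le_exp.mpr ?_)
  have hw : 1 + ‖w‖ ≤ 2 * (1 + ‖z‖) := by
    have := norm_le_norm_add_norm_sub' w z
    rw [mem_sphere_iff_norm.mp hw] at this
    linarith [norm_nonneg z]
  calc A + B * (1 + ‖w‖) ^ ρ ≤ A + B * (2 * (1 + ‖z‖)) ^ ρ := by gcongr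
    _ = A + 2 ^ ρ * B * (1 + ‖z‖) ^ ρ := by
      rw [Real.mul_rpow (by norm_num) (by positivity)]; ring

theorem norm_iteratedDeriv_le_exp_of_norm_le_exp {f : ℂ → ℂ} (hf : Differentiable ℂ f)
    {A B ρ : ℝ} (hB : 0 ≤ B) (hρ : 0 ≤ ρ)
    (hbound : ∀ z, ‖f z‖ ≤ Real.exp (A + B * (1 + ‖z‖) ^ ρ)) (n : ℕ) (z : ℂ) :
    ‖iteratedDeriv n f z‖ ≤ Real.exp (A + (2 ^ ρ) ^ n * B * (1 + ‖z‖) ^ ρ) := by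
  induction n generalizing z with
  | zero => simpa using hbound z
  | succ n ih =>
    rw [iteratedDeriv_succ, pow_succ', mul_assoc (2 ^ ρ) _ B]
    exact norm_deriv_le_exp_of_norm_le_exp (hf.contDiff.differentiable_iteratedDeriv' n)
      (by positivity) hρ ih z

theorem norm_le_of_re_le_rpow {h : ℂ → ℂ} (hh : Differentiable ℂ h) {A B ρ : ℝ}
    (hB : 0 ≤ B) (hρ : 0 ≤ ρ) (hre : ∀ z, (h z).re ≤ A + B * (1 + ‖z‖) ^ ρ) (z : ℂ) :
    ‖h z‖ ≤ 2 * (|A| + 1) + 3 * ‖h 0‖ + 2 * 3 ^ ρ * B * (1 + ‖z‖) ^ ρ := by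
  set M := |A| + 1 + 3 ^ ρ * B * (1 + ‖z‖) ^ ρ
  have hM : 0 < M := by positivity
  have hmaps : Set.MapsTo h (ball 0 (2 * (1 + ‖z‖))) {w | w.re ≤ M} := fun w hw => by
    have hw : 1 + ‖w‖ ≤ 3 * (1 + ‖z‖) := by linarith [mem_ball_zero_iff.mp hw, norm_nonneg z]
    calc (h w).re ≤ A + B * (1 + ‖w‖) ^ ρ := hre w
      _ ≤ |A| + 1 + B * (3 * (1 + ‖z‖)) ^ ρ := by gcongr; linarith [le_abs_self A]
      _ = M := by rw [Real.mul_rpow (by norm_num) (by positivity)]; ring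
  have hbc := borelCaratheodory hM hh.differentiableOn hmaps (by positivity)
    (mem_ball_zero_iff.mpr (by linarith [norm_nonneg z]))
  have hgap : 0 < 2 * (1 + ‖z‖) - ‖z‖ := by linarith [norm_nonneg z]
  rw [← add_div, le_div_iff₀ hgap] at hbc
  -- with `R = 2 * (1 + ‖z‖)`: `‖z‖ ≤ R - ‖z‖` and `R + ‖z‖ ≤ 3 * (R - ‖z‖)`
  nlinarith [norm_nonneg z, norm_nonneg (h 0)]

theorem iteratedDeriv_two_eq_zero_of_norm_le_rpow {h : ℂ → ℂ} (hh : Differentiable ℂ h)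
    {A B ρ : ℝ} (hB : 0 ≤ B) (hρ₀ : 0 ≤ ρ) (hρ₂ : ρ < 2)
    (hbound : ∀ z, ‖h z‖ ≤ A + B * (1 + ‖z‖) ^ ρ) :
    iteratedDeriv 2 h = 0 := by
  funext c
  have hcauchy : ∀ R, 1 + ‖c‖ ≤ R →
      ‖iteratedDeriv 2 h c‖ ≤ 2 * A * R ^ (-2 : ℝ) + 2 * 2 ^ ρ * B * R ^ (ρ - 2) := by
    intro R hR
    have hR₀ : 0 < R := by linarith [norm_nonneg c]
    have hsphere : ∀ w ∈ sphere c R, ‖h w‖ ≤ A + 2 ^ ρ * B * R ^ ρ := fun w hw => by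
      have hw : 1 + ‖w‖ ≤ 2 * R := by
        have := norm_le_norm_add_norm_sub' w c
        rw [mem_sphere_iff_norm.mp hw] at this
        linarith
      calc ‖h w‖ ≤ A + B * (1 + ‖w‖) ^ ρ := hbound w
        _ ≤ A + B * (2 * R) ^ ρ := by gcongr
        _ = A + 2 ^ ρ * B * R ^ ρ := by rw [Real.mul_rpow (by norm_num) hR₀.le]; ring
    refine (norm_iteratedDeriv_le_of_forall_mem_sphere_norm_le 2 hR₀ hh.diffContOnCl
      hsphere).trans_eq ?_
    rw [Real.rpow_neg hR₀.le, Real.rpow_sub hR₀, Real.rpow_two]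
    simp only [Nat.factorial_two, Nat.cast_ofNat]
    ring
  have hlim : Tendsto (fun R : ℝ => 2 * A * R ^ (-2 : ℝ) + 2 * 2 ^ ρ * B * R ^ (ρ - 2))
      atTop (𝓝 0) := by
    have h₂ := (tendsto_rpow_neg_atTop two_pos).const_mul (2 * A)
    have hρ := (tendsto_rpow_neg_atTop (sub_pos.mpr hρ₂)).const_mul (2 * 2 ^ ρ * B)
    simpa using h₂.add hρ
  exact norm_le_zero_iff.mp <|
    ge_of_tendsto hlim ((eventually_ge_atTop (1 + ‖c‖)).mono hcauchy)

theorem exists_eq_add_mul_of_re_le_rpow {h : ℂ → ℂ} (hh : Differentiable ℂ h) {A B ρ : ℝ}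
    (hB : 0 ≤ B) (hρ₀ : 0 ≤ ρ) (hρ₂ : ρ < 2)
    (hre : ∀ z, (h z).re ≤ A + B * (1 + ‖z‖) ^ ρ) :
    ∃ u v : ℂ, ∀ z, h z = u + v * z := by
  obtain ⟨P, hP, hPh⟩ := hh.exists_polynomial_of_iteratedDeriv_succ_eq_zero <|
    iteratedDeriv_two_eq_zero_of_norm_le_rpow hh (by positivity) hρ₀ hρ₂
      (norm_le_of_re_le_rpow hh hB hρ₀ hre)
  refine ⟨P.coeff 0, P.coeff 1, fun z => ?_⟩
  conv_lhs => rw [hPh, eq_X_add_C_of_natDegree_le_one hP]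
  simp only [eval_add, eval_mul, eval_C, eval_X]
  ring

theorem exists_eq_add_mul_exp_of_ne {f : ℂ → ℂ} (hf : Differentiable ℂ f) {A B ρ : ℝ}
    (hB : 0 ≤ B) (hρ₀ : 0 ≤ ρ) (hρ₂ : ρ < 2)
    (hbound : ∀ z, ‖f z‖ ≤ Real.exp (A + B * (1 + ‖z‖) ^ ρ)) {c : ℂ} (hc : ∀ z, f z ≠ c) :
    ∃ a v : ℂ, ∀ z, f z = c + a * exp (v * z) := by
  obtain ⟨h, hh, hfh⟩ :=
    (hf.sub_const c).exists_eq_exp_of_ne_zero fun z => sub_ne_zero.mpr (hc z)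
  have hre : ∀ z, (h z).re ≤ |A| + Real.log (1 + ‖c‖) + B * (1 + ‖z‖) ^ ρ := by
    intro z
    set E := Real.exp (|A| + B * (1 + ‖z‖) ^ ρ)
    have hE : 1 ≤ E := Real.one_le_exp (by positivity)
    rw [← Real.exp_le_exp, ← norm_exp, ← hfh z, add_right_comm, Real.exp_add,
      Real.exp_log (by positivity)]
    calc ‖f z - c‖ ≤ ‖f z‖ + ‖c‖ := norm_sub_le _ _
      _ ≤ E + ‖c‖ * E := by
        gcongr
        · exact (hbound z).trans (Real.exp_le_exp.mpr (by gcongr; exact le_abs_self A))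
        · exact le_mul_of_one_le_right (norm_nonneg c) hE
      _ = E * (1 + ‖c‖) := by ring
  obtain ⟨u, v, huv⟩ := exists_eq_add_mul_of_re_le_rpow hh hB hρ₀ hρ₂ hre
  exact ⟨exp u, v, fun z => by rw [← sub_eq_iff_eq_add', hfh, huv, exp_add]⟩

theorem iteratedDeriv_mul_exp_mul (k : ℕ) (a v z : ℂ) :
    iteratedDeriv k (fun z => a * exp (v * z)) z = a * v ^ k * exp (v * z) := by
  rw [iteratedDeriv_const_mul_field, iteratedDeriv_cexp_const_mul, mul_assoc]

theorem finite_setOf_eq_of_iteratedDeriv_eq_const {Φ : ℂ → ℂ} (hΦ : Differentiable ℂ Φ)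
    {k : ℕ} (hk : k ≠ 0) {b : ℂ} (hb : b ≠ 0) (hΦk : ∀ z, iteratedDeriv k Φ z = b) (d : ℂ) :
    {z | Φ z = d}.Finite := by
  obtain ⟨P, -, hΦP⟩ := hΦ.exists_polynomial_of_iteratedDeriv_succ_eq_zero (n := k) <| by
    rw [iteratedDeriv_succ, funext hΦk]
    exact funext fun _ => deriv_const _ b
  have hPd : P - C d ≠ 0 := by
    intro hP
    have hΦd : Φ = fun _ => d := funext fun z => by
      rw [hΦP, sub_eq_zero.mp hP, eval_C]
    have hΦk₀ := hΦk 0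
    rw [hΦd, iteratedDeriv_const, if_neg hk] at hΦk₀
    exact hb hΦk₀.symm
  refine (finite_setOfPred_isRoot hPd).subset fun z hz => ?_
  simpa [IsRoot, ← hΦP, sub_eq_zero] using hz

theorem exists_iteratedDeriv_eq_and_ne_zero {g : ℂ → ℂ} (hg : Differentiable ℂ g) {k : ℕ}
    (hk : k ≠ 0) {a b c v z₀ : ℂ} (hb : b ≠ 0) (hv : v ≠ 0)
    (hgk : ∀ z, iteratedDeriv k g z = b + c * exp (v * z)) (hz₀ : iteratedDeriv k g z₀ = a) :
    ∃ z, iteratedDeriv k g z = a ∧ g z ≠ 0 := by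
  by_contra! hzeros
  set Φ := fun z => g z - c / v ^ k * exp (v * z)
  have hΦ : Differentiable ℂ Φ := hg.sub (by fun_prop)
  have hΦk : ∀ z, iteratedDeriv k Φ z = b := fun z => by
    rw [iteratedDeriv_fun_sub hg.contDiff.contDiffAt (by fun_prop), iteratedDeriv_mul_exp_mul,
      hgk]
    field_simp
    ring
  set p := 2 * Real.pi * I / v
  have hexp : ∀ n : ℕ, exp (v * (z₀ + n * p)) = exp (v * z₀) := fun n => by
    rw [show v * (z₀ + n * p) = v * z₀ + n * (2 * Real.pi * I) by simp only [p]; field_simp,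
      exp_periodic.nat_mul n]
  have hperiod : ∀ n : ℕ, iteratedDeriv k g (z₀ + n * p) = a := fun n => by
    rw [hgk, hexp, ← hgk, hz₀]
  have hinj : Function.Injective fun n : ℕ => z₀ + n * p := fun m n hmn => by
    simpa [p, hv, Real.pi_ne_zero, I_ne_zero] using hmn
  refine Set.infinite_of_injective_forall_mem hinj (fun n => ?_)
    (finite_setOf_eq_of_iteratedDeriv_eq_const hΦ hk hb hΦk (-(c / v ^ k) * exp (v * z₀)))
  simp only [Set.mem_ofPred_eq, Φ, hzeros _ (hperiod n), hexp]
  ring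

theorem exists_iteratedDeriv_eq_of_ne_zero {g : ℂ → ℂ} (hg : Differentiable ℂ g) {A B ρ : ℝ}
    (hB : 0 ≤ B) (hρ₀ : 0 ≤ ρ) (hρ₂ : ρ < 2)
    (hbound : ∀ z, ‖g z‖ ≤ Real.exp (A + B * (1 + ‖z‖) ^ ρ)) (hg₀ : ∀ z, g z ≠ 0)
    (hnc : ¬ ∃ c, ∀ z, g z = c) (k : ℕ) {b : ℂ} (hb : b ≠ 0) :
    ∃ z, iteratedDeriv k g z = b := by
  obtain ⟨a, v, hav⟩ := exists_eq_add_mul_exp_of_ne hg hB hρ₀ hρ₂ hbound hg₀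
  simp only [zero_add] at hav
  have ha : a ≠ 0 := by rintro rfl; exact hnc ⟨0, by simpa using hav⟩
  have hv : v ≠ 0 := by rintro rfl; exact hnc ⟨a, by simpa using hav⟩
  refine ⟨log (b / (a * v ^ k)) / v, ?_⟩
  rw [funext hav, iteratedDeriv_mul_exp_mul, mul_div_cancel₀ _ hv,
    exp_log (div_ne_zero hb (by positivity))]
  field_simp

end Complex

theorem stmt_2_general (g : ℂ → ℂ) (k : ℕ) (hk : 1 ≤ k) (a b : ℂ) (hb : b ≠ 0)
    (hg : Differentiable ℂ g) (hnc : ¬ ∃ c : ℂ, ∀ z, g z = c)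
    (hord : ∀ ε : ℝ, 0 < ε → ∃ C : ℝ, 0 < C ∧ ∀ z : ℂ, ‖g z‖ ≤ C * Real.exp (‖z‖ ^ (1 + ε)))
    (homit : ∀ z : ℂ, iteratedDeriv k g z ≠ b)
    (hshare : ∀ z : ℂ, g z = 0 ↔ iteratedDeriv k g z = a) :
    False := by
  obtain ⟨C, hC, hgC⟩ := hord (1 / 2) (by norm_num)
  have hgrowth : ∀ z, ‖g z‖ ≤ Real.exp (Real.log C + 1 * (1 + ‖z‖) ^ (1 + 1 / 2 : ℝ)) :=
    fun z => by
      rw [Real.exp_add, Real.exp_log hC, one_mul]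
      exact (hgC z).trans (by gcongr; linarith)
  by_cases hzero : ∃ z₀, g z₀ = 0
  · obtain ⟨z₀, hz₀⟩ := hzero
    obtain ⟨c, v, hgk⟩ :=
      exists_eq_add_mul_exp_of_ne (hg.contDiff.differentiable_iteratedDeriv' k) (by positivity)
        (by norm_num) (by norm_num)
        (norm_iteratedDeriv_le_exp_of_norm_le_exp hg zero_le_one (by norm_num) hgrowth k) homit
    have hz₀a := (hshare z₀).mp hz₀
    rcases eq_or_ne v 0 with rfl | hv
    · exact hnc ⟨0, fun z => (hshare z).mpr (by rw [hgk, ← hz₀a, hgk]; simp)⟩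
    · obtain ⟨z, hza, hgz⟩ := exists_iteratedDeriv_eq_and_ne_zero hg (by omega) hb hv hgk hz₀a
      exact hgz ((hshare z).mpr hza)
  · push Not at hzero
    obtain ⟨z, hz⟩ := exists_iteratedDeriv_eq_of_ne_zero hg zero_le_one (by norm_num)
      (by norm_num) hgrowth hzero hnc k hb
    exact homit z hz

/-- There is no nonconstant entire function `g` of order at most one such that
`g^{(k)}` omits `b` (with `b ≠ 0`, `a ≠ b`) and `g(z) = 0 ↔ g^{(k)}(z) = a`. -/
theorem stmt_2 (g : ℂ → ℂ) (k : ℕ) (hk : 1 ≤ k) (a b : ℂ) (hb : b ≠ 0) (hab : a ≠ b)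
    (hg : Differentiable ℂ g) (hnc : ¬ ∃ c : ℂ, ∀ z, g z = c)
    (hord : ∀ ε : ℝ, 0 < ε → ∃ C : ℝ, 0 < C ∧ ∀ z : ℂ, ‖g z‖ ≤ C * Real.exp (‖z‖ ^ (1 + ε)))
    (homit : ∀ z : ℂ, iteratedDeriv k g z ≠ b)
    (hshare : ∀ z : ℂ, g z = 0 ↔ iteratedDeriv k g z = a) :
    False :=
  stmt_2_general g k hk a b hb hg hnc hord homit hshare
end

section
/- Let k be a positive integer, b a nonzero complex number, and a = ((-1)^{k+1} + 1)·b. For each positive integer n define f_n(z) = b(z - 1/n)^k / k! + (-1)^{k+1} / (k!(z - 1/n)) + a. Then f_n^{(k)}(z) = b - 1/(z - 1/n)^{k+1}, the functions f_n and f_n^{(k)} share the value a (f_n(z) = a ⟺ f_n^{(k)}(z) = a on their common domain), and f_n^{(k)}(z) ≠ b for all z ≠ 1/n. -/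
/-!
In `w = z - 1/n` the function `f` is the Laurent polynomial `b/k! w^k + (-1)^(k+1)/k! w⁻¹ + a`.
Differentiating `k` times turns `w^k` into `k!` and `w⁻¹` into `(-1)^k k! w^(-k-1)`, so
`f^(k) = b - w^(-(k+1))`, which never equals `b`. Both `f = a` and `f^(k) = a` reduce to
`b w^(k+1) = (-1)^k`.
-/

open Nat

section Laurent

variable {𝕜 : Type*} [NontriviallyNormedField 𝕜]

theorem iteratedDeriv_inv (k : ℕ) (x : 𝕜) :
    iteratedDeriv k Inv.inv x = (-1) ^ k * k ! * x ^ (-1 - k : ℤ) := by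
  rw [iteratedDeriv_eq_iterate, iter_deriv_inv]

theorem iteratedDeriv_mul_pow_self_add_mul_inv_add_const {k : ℕ} (hk : 1 ≤ k) (p q a : 𝕜)
    {w : 𝕜} (hw : w ≠ 0) :
    iteratedDeriv k (fun x => p * x ^ k + q * x⁻¹ + a) w =
      p * k ! + q * (-1) ^ k * k ! / w ^ (k + 1) := by
  have hpow : ContDiffAt 𝕜 k (fun x => p * x ^ k) w := by fun_prop
  have hinv : ContDiffAt 𝕜 k (fun x => q * x⁻¹) w :=
    contDiffAt_const.mul (contDiffAt_inv 𝕜 hw)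
  rw [iteratedDeriv_fun_add (hpow.add hinv) contDiffAt_const, iteratedDeriv_fun_add hpow hinv,
    iteratedDeriv_const_mul_field, iteratedDeriv_const_mul_field, iteratedDeriv_pow,
    iteratedDeriv_inv, iteratedDeriv_const, if_neg (by omega), Nat.descFactorial_self,
    Nat.sub_self, pow_zero, mul_one, add_zero, zpow_sub₀ hw, zpow_neg_one, zpow_natCast]
  field_simp
  ring

theorem iteratedDeriv_mul_sub_pow_self_add_mul_sub_inv_add_const {k : ℕ} (hk : 1 ≤ k)
    (p q a : 𝕜) {c z : 𝕜} (hz : z ≠ c) :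
    iteratedDeriv k (fun x => p * (x - c) ^ k + q * (x - c)⁻¹ + a) z =
      p * k ! + q * (-1) ^ k * k ! / (z - c) ^ (k + 1) := by
  rw [iteratedDeriv_comp_sub_const k (fun x => p * x ^ k + q * x⁻¹ + a) c]
  exact iteratedDeriv_mul_pow_self_add_mul_inv_add_const hk p q a (sub_ne_zero.2 hz)

end Laurent

section ValueSharing

variable {K : Type*} [Field K] [CharZero K] {k : ℕ} {b w : K}

theorem mul_pow_div_factorial_add_neg_one_pow_div_eq_zero_iff (hw : w ≠ 0) :
    b * w ^ k / k ! + (-1) ^ (k + 1) / (k ! * w) = 0 ↔ b * w ^ (k + 1) = (-1) ^ k := by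
  have hfact : (k ! : K) ≠ 0 := by exact_mod_cast k.factorial_ne_zero
  have : b * w ^ k / k ! + (-1) ^ (k + 1) / (k ! * w) =
      (b * w ^ (k + 1) - (-1) ^ k) / (k ! * w) := by
    field_simp
    ring
  rw [this, div_eq_zero_iff, or_iff_left (mul_ne_zero hfact hw), sub_eq_zero]

theorem sub_one_div_pow_eq_neg_one_pow_add_one_mul_iff (hw : w ≠ 0) :
    b - 1 / w ^ (k + 1) = ((-1) ^ (k + 1) + 1) * b ↔ b * w ^ (k + 1) = (-1) ^ k := by
  have hsign : ((-1) ^ k * (-1) ^ k : K) = 1 := by rw [← mul_pow]; norm_num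
  have : b - 1 / w ^ (k + 1) - ((-1) ^ (k + 1) + 1) * b =
      (b * w ^ (k + 1) - (-1) ^ k) / ((-1) ^ k * w ^ (k + 1)) := by
    field_simp
    linear_combination b * w ^ (k + 1) * hsign
  rw [← sub_eq_zero, this, div_eq_zero_iff, or_iff_left (by simp [hw]), sub_eq_zero]

end ValueSharing

theorem stmt_3_general (k : ℕ) (hk : 1 ≤ k) (b : ℂ) (n : ℕ)
    (a : ℂ) (ha : a = ((-1 : ℂ) ^ (k + 1) + 1) * b) (f : ℂ → ℂ)
    (hf : ∀ z : ℂ, f z =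
      b * (z - 1 / (n : ℂ)) ^ k / (Nat.factorial k) +
        (-1 : ℂ) ^ (k + 1) / ((Nat.factorial k) * (z - 1 / (n : ℂ))) + a) :
    (∀ z : ℂ, z ≠ 1 / (n : ℂ) →
        iteratedDeriv k f z = b - 1 / (z - 1 / (n : ℂ)) ^ (k + 1)) ∧
    (∀ z : ℂ, z ≠ 1 / (n : ℂ) → (f z = a ↔ iteratedDeriv k f z = a)) ∧
    (∀ z : ℂ, z ≠ 1 / (n : ℂ) → iteratedDeriv k f z ≠ b) := by
  set c : ℂ := 1 / n
  have hf_laurent : f = fun z => b / k ! * (z - c) ^ k + (-1) ^ (k + 1) / k ! * (z - c)⁻¹ + a := by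
    funext z
    -- this holds at the pole too, since there `(k! * 0)⁻¹ = 0 = 0⁻¹`
    rw [hf z, div_eq_mul_inv _ (_ * _), mul_inv]
    ring
  have hder : ∀ z, z ≠ c → iteratedDeriv k f z = b - 1 / (z - c) ^ (k + 1) := by
    intro z hz
    have hfact : (k ! : ℂ) ≠ 0 := by exact_mod_cast k.factorial_ne_zero
    have hsign : ((-1) ^ (k + 1) * (-1) ^ k : ℂ) = -1 := by
      rw [← pow_add]; exact Odd.neg_one_pow ⟨k, by ring⟩
    rw [hf_laurent, iteratedDeriv_mul_sub_pow_self_add_mul_sub_inv_add_const hk _ _ _ hz]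
    field_simp
    linear_combination hsign
  refine ⟨hder, fun z hz => ?_, fun z hz => ?_⟩
  · have hw := sub_ne_zero.2 hz
    rw [hder z hz, hf z, add_eq_right, mul_pow_div_factorial_add_neg_one_pow_div_eq_zero_iff hw, ha,
      sub_one_div_pow_eq_neg_one_pow_add_one_mul_iff hw]
  · rw [hder z hz, Ne, sub_eq_self]
    exact one_div_ne_zero (pow_ne_zero _ (sub_ne_zero.2 hz))

/-- Example 2 of the paper: with `a = ((-1)^{k+1}+1)·b`, the functions
`f_n(z) = b(z-1/n)^k/k! + (-1)^{k+1}/(k!(z-1/n)) + a` satisfy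
`f_n^{(k)}(z) = b - 1/(z-1/n)^{k+1}` off the pole, `f_n` and `f_n^{(k)}` share the
value `a` there, and `f_n^{(k)}` never takes the value `b` off the pole. -/
theorem stmt_3 (k : ℕ) (hk : 1 ≤ k) (b : ℂ) (hb : b ≠ 0) (n : ℕ) (hn : 1 ≤ n)
    (a : ℂ) (ha : a = ((-1 : ℂ) ^ (k + 1) + 1) * b) (f : ℂ → ℂ)
    (hf : ∀ z : ℂ, f z =
      b * (z - 1 / (n : ℂ)) ^ k / (Nat.factorial k) +
        (-1 : ℂ) ^ (k + 1) / ((Nat.factorial k) * (z - 1 / (n : ℂ))) + a) :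
    (∀ z : ℂ, z ≠ 1 / (n : ℂ) →
        iteratedDeriv k f z = b - 1 / (z - 1 / (n : ℂ)) ^ (k + 1)) ∧
    (∀ z : ℂ, z ≠ 1 / (n : ℂ) → (f z = a ↔ iteratedDeriv k f z = a)) ∧
    (∀ z : ℂ, z ≠ 1 / (n : ℂ) → iteratedDeriv k f z ≠ b) :=
  stmt_3_general k hk b n a ha f hf
end

section
/- The family {f_n : n ≥ 1} with f_n(z) = e^{nz} - z^{k-1}/n^k + z^{k-1} is not normal on the unit disk: there is no subsequence converging locally uniformly (in the spherical metric) on the unit disk to a holomorphic function or to ∞. -/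
/-!
Away from the origin the term `e^{nz}` dominates, e.g. `|f_n(1/2)| → ∞`, while the polynomial
correction is bounded by `2` on the closed unit disk, so `|f_n(0)| ≤ 3` for every `n`.
The first fact rules out a finite limit at `1/2`, the second rules out divergence to `∞` at `0`.
-/

open Filter Metric

lemma norm_pow_sub_pow_div_le_two {𝕜 : Type*} [NormedField 𝕜] {z w : 𝕜} (j : ℕ)
    (hz : ‖z‖ ≤ 1) (hw : 1 ≤ ‖w‖) : ‖z ^ j - z ^ j / w‖ ≤ 2 := by
  have hzj : ‖z ^ j‖ ≤ 1 := by
    rw [norm_pow]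
    exact pow_le_one₀ (norm_nonneg z) hz
  have hzjw : ‖z ^ j / w‖ ≤ 1 := by
    rw [norm_div]
    exact div_le_one_of_le₀ (hzj.trans hw) (norm_nonneg w)
  calc ‖z ^ j - z ^ j / w‖ ≤ ‖z ^ j‖ + ‖z ^ j / w‖ := norm_sub_le _ _
    _ ≤ 2 := by linarith

lemma TendstoLocallyUniformlyOn.not_tendsto_norm_atTop {α ι E : Type*} [TopologicalSpace α]
    [SeminormedAddCommGroup E] {F : ι → α → E} {g : α → E} {s : Set α} {p : Filter ι} [p.NeBot]
    (hF : TendstoLocallyUniformlyOn F g p s) {x : α} (hx : x ∈ s) :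
    ¬ Tendsto (fun i => ‖F i x‖) p atTop :=
  not_tendsto_atTop_of_tendsto_nhds (hF.tendsto_at hx).norm

section ExpFamily

variable {k : ℕ} {f : ℕ → ℂ → ℂ}

lemma norm_sub_exp_le_two (hf : ∀ n : ℕ, ∀ z : ℂ, f n z =
      Complex.exp (((n : ℂ) + 1) * z) - z ^ (k - 1) / ((n : ℂ) + 1) ^ k + z ^ (k - 1))
    (n : ℕ) {z : ℂ} (hz : ‖z‖ ≤ 1) :
    ‖f n z - Complex.exp (((n : ℂ) + 1) * z)‖ ≤ 2 := by
  have hw : 1 ≤ ‖((n : ℂ) + 1) ^ k‖ := by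
    rw [norm_pow]
    refine one_le_pow₀ ?_
    rw [show (n : ℂ) + 1 = ((n + 1 : ℕ) : ℂ) by push_cast; rfl, Complex.norm_natCast]
    exact_mod_cast Nat.le_add_left 1 n
  calc ‖f n z - Complex.exp (((n : ℂ) + 1) * z)‖
        = ‖z ^ (k - 1) - z ^ (k - 1) / ((n : ℂ) + 1) ^ k‖ := by rw [hf]; ring_nf
    _ ≤ 2 := norm_pow_sub_pow_div_le_two _ hz hw

lemma tendsto_norm_apply_half_atTop (hf : ∀ n : ℕ, ∀ z : ℂ, f n z =
      Complex.exp (((n : ℂ) + 1) * z) - z ^ (k - 1) / ((n : ℂ) + 1) ^ k + z ^ (k - 1)) :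
    Tendsto (fun n => ‖f n (1 / 2)‖) atTop atTop := by
  have hlow (n : ℕ) : Real.exp ((n + 1) / 2) - 2 ≤ ‖f n (1 / 2)‖ := by
    have hexp : Complex.exp (((n : ℂ) + 1) * (1 / 2)) = Complex.exp (((n + 1) / 2 : ℝ)) := by
      push_cast; ring_nf
    have hclose := norm_sub_exp_le_two hf n (z := 1 / 2) (by norm_num)
    have := norm_sub_norm_le (Complex.exp (((n : ℂ) + 1) * (1 / 2))) (f n (1 / 2))
    rw [norm_sub_rev, hexp, Complex.norm_exp_ofReal] at this
    rw [hexp] at hclose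
    linarith
  refine tendsto_atTop_mono hlow (tendsto_atTop_add_const_right _ _ ?_)
  refine Real.tendsto_exp_atTop.comp (Tendsto.atTop_div_const (by norm_num) ?_)
  exact tendsto_atTop_add_const_right _ _ tendsto_natCast_atTop_atTop

lemma norm_apply_zero_le_three (hf : ∀ n : ℕ, ∀ z : ℂ, f n z =
      Complex.exp (((n : ℂ) + 1) * z) - z ^ (k - 1) / ((n : ℂ) + 1) ^ k + z ^ (k - 1))
    (n : ℕ) : ‖f n 0‖ ≤ 3 := by
  have hclose := norm_sub_exp_le_two hf n (z := 0) (by simp)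
  have := norm_le_norm_add_norm_sub' (f n 0) (Complex.exp (((n : ℂ) + 1) * 0))
  simp only [mul_zero, Complex.exp_zero, norm_one] at this hclose
  linarith

end ExpFamily

theorem stmt_5_general (k : ℕ) (f : ℕ → ℂ → ℂ)
    (hf : ∀ n : ℕ, ∀ z : ℂ, f n z =
      Complex.exp (((n : ℂ) + 1) * z) - z ^ (k - 1) / ((n : ℂ) + 1) ^ k + z ^ (k - 1)) :
    ¬ ∃ φ : ℕ → ℕ, StrictMono φ ∧
      ((∃ g : ℂ → ℂ, DifferentiableOn ℂ g (ball (0 : ℂ) 1) ∧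
          TendstoLocallyUniformlyOn (fun m => f (φ m)) g atTop (ball (0 : ℂ) 1)) ∨
        (∀ K : Set ℂ, K ⊆ ball (0 : ℂ) 1 → IsCompact K →
          ∀ M : ℝ, ∀ᶠ m in atTop, ∀ z ∈ K, M ≤ ‖f (φ m) z‖)) := by
  rintro ⟨φ, hφ, ⟨g, -, hconv⟩ | hdiv⟩
  · have hhalf : (1 / 2 : ℂ) ∈ ball (0 : ℂ) 1 := by simp; norm_num
    exact hconv.not_tendsto_norm_atTop hhalf
      ((tendsto_norm_apply_half_atTop hf).comp hφ.tendsto_atTop)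
  · obtain ⟨m, hm⟩ := (hdiv {0} (by simp) isCompact_singleton 4).exists
    linarith [hm 0 rfl, norm_apply_zero_le_three hf (φ m)]

/-- The family `f_n(z) = e^{nz} - z^{k-1}/n^k + z^{k-1}` (n ≥ 1) is not normal on the
unit disk: no subsequence converges locally uniformly to a holomorphic function, nor
uniformly to ∞ on compact subsets. -/
theorem stmt_5 (k : ℕ) (hk : 1 ≤ k) (f : ℕ → ℂ → ℂ)
    (hf : ∀ n : ℕ, ∀ z : ℂ, f n z =
      Complex.exp (((n : ℂ) + 1) * z) - z ^ (k - 1) / ((n : ℂ) + 1) ^ k + z ^ (k - 1)) :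
    ¬ ∃ φ : ℕ → ℕ, StrictMono φ ∧
      ((∃ g : ℂ → ℂ, DifferentiableOn ℂ g (ball (0 : ℂ) 1) ∧
          TendstoLocallyUniformlyOn (fun m => f (φ m)) g atTop (ball (0 : ℂ) 1)) ∨
        (∀ K : Set ℂ, K ⊆ ball (0 : ℂ) 1 → IsCompact K →
          ∀ M : ℝ, ∀ᶠ m in atTop, ∀ z ∈ K, M ≤ ‖f (φ m) z‖)) :=
  stmt_5_general k f hf
end

section
/- Let f_n be entire functions, z_n → z₀ complex numbers, ρ_n → 0 positive reals, a ∈ ℂ, and suppose g_n(ζ) := ρ_n^{-k}(f_n(z_n + ρ_n ζ) - a) converges locally uniformly on ℂ to a nonconstant entire function g. If for each n, f_n(z) = a implies f_n^{(k)}(z) = a, and g(ζ₀) = 0, then g^{(k)}(ζ₀) = a. -/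
/-!
Since `g` is entire and not identically zero, its zero `ζ₀` is isolated, so by Hurwitz's theorem
(a consequence of the minimum modulus principle) there are zeros `ζ` of `gₙ` arbitrarily close to
`ζ₀` for arbitrarily large `n`. At such a zero `fₙ(zₙ + ρₙ ζ) = a`, and the factor `ρₙ⁻ᵏ` exactly
cancels the factor `ρₙᵏ` produced by the chain rule, so
`gₙ⁽ᵏ⁾(ζ) = fₙ⁽ᵏ⁾(zₙ + ρₙ ζ) = a`. By Weierstrass' theorem `gₙ⁽ᵏ⁾ → g⁽ᵏ⁾` locally uniformly, and
passing to the limit gives `g⁽ᵏ⁾(ζ₀) = a`.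
-/

open Filter Metric Topology

theorem iteratedDeriv_rescale {𝕜 : Type*} [NontriviallyNormedField 𝕜] {f : 𝕜 → 𝕜} {k : ℕ}
    (hf : ContDiff 𝕜 k f) (hk : 0 < k) (z a : 𝕜) {c : 𝕜} (hc : c ≠ 0) (ζ : 𝕜) :
    iteratedDeriv k (fun ζ => (c ^ k)⁻¹ * (f (z + c * ζ) - a)) ζ
      = iteratedDeriv k f (z + c * ζ) := by
  have htrans : ContDiff 𝕜 k (fun w => f (z + w)) := hf.comp (contDiff_const.add contDiff_id)
  calc iteratedDeriv k (fun ζ => (c ^ k)⁻¹ * (f (z + c * ζ) - a)) ζ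
      = (c ^ k)⁻¹ * iteratedDeriv k (fun ζ => -a + f (z + c * ζ)) ζ := by
        simp only [sub_eq_neg_add, iteratedDeriv_const_mul_field]
    _ = (c ^ k)⁻¹ * (c ^ k * iteratedDeriv k f (z + c * ζ)) := by
        rw [iteratedDeriv_const_add hk, iteratedDeriv_comp_const_mul htrans,
          iteratedDeriv_comp_const_add]
    _ = iteratedDeriv k f (z + c * ζ) := inv_mul_cancel_left₀ (pow_ne_zero k hc) _

theorem TendstoLocallyUniformly.iteratedDeriv {E ι : Type*} [NormedAddCommGroup E]
    [NormedSpace ℂ E] [CompleteSpace E] {φ : Filter ι} {F : ι → ℂ → E} {f : ℂ → E}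
    (hFf : TendstoLocallyUniformly F f φ) (hF : ∀ n, Differentiable ℂ (F n)) (k : ℕ) :
    TendstoLocallyUniformly (fun n => iteratedDeriv k (F n)) (iteratedDeriv k f) φ := by
  induction k with
  | zero => simpa using hFf
  | succ k ih =>
    have hdiff (n : ι) : DifferentiableOn ℂ (_root_.iteratedDeriv k (F n)) Set.univ :=
      ((hF n).contDiff.differentiable_iteratedDeriv' k).differentiableOn
    simpa only [← tendstoLocallyUniformlyOn_univ, iteratedDeriv_succ, Function.comp_def] using
      (tendstoLocallyUniformlyOn_univ.mpr ih).deriv (Eventually.of_forall hdiff) isOpen_univ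

theorem TendstoLocallyUniformly.tendsto_prod_nhds {α β ι : Type*} [TopologicalSpace α]
    [UniformSpace β] {φ : Filter ι} {F : ι → α → β} {f : α → β} {x : α}
    (hFf : TendstoLocallyUniformly F f φ) (hf : ContinuousAt f x) :
    Tendsto (fun q : ι × α => F q.1 q.2) (φ ×ˢ 𝓝 x) (𝓝 (f x)) :=
  tendsto_comp_of_locally_uniform_limit hf tendsto_snd fun u hu =>
    let ⟨t, ht, hFt⟩ := hFf u hu x
    ⟨t, ht, tendsto_fst.eventually hFt⟩

theorem Differentiable.eventually_ne_zero {f : ℂ → ℂ} (hf : Differentiable ℂ f) (hf0 : f ≠ 0)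
    (c : ℂ) : ∀ᶠ w in 𝓝[≠] c, f w ≠ 0 :=
  not_frequently.mp fun hzeros => hf0 <| funext fun w =>
    (hf.differentiableOn.analyticOnNhd isOpen_univ).eqOn_zero_of_preconnected_of_frequently_eq_zero
      isPreconnected_univ (Set.mem_univ c) hzeros (Set.mem_univ w)

/-- Minimum modulus principle: without a zero, `h⁻¹` would violate the maximum modulus principle. -/
theorem exists_zero_mem_closedBall_of_norm_lt {h : ℂ → ℂ} {c : ℂ} {r m : ℝ}
    (hh : DiffContOnCl ℂ h (ball c r)) (hr : 0 < r) (hc : ‖h c‖ < m)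
    (hsphere : ∀ w ∈ sphere c r, m ≤ ‖h w‖) : ∃ w ∈ closedBall c r, h w = 0 := by
  by_contra! hne
  have hm : 0 < m := (norm_nonneg _).trans_lt hc
  have hinv : DiffContOnCl ℂ h⁻¹ (ball c r) := hh.inv (by rwa [closure_ball c hr.ne'])
  have hmax : ‖h⁻¹ c‖ ≤ m⁻¹ := by
    refine Complex.norm_le_of_forall_mem_frontier_norm_le isBounded_ball hinv (fun w hw => ?_)
      (subset_closure (mem_ball_self hr))
    rw [frontier_ball c hr.ne'] at hw
    simpa only [Pi.inv_apply, norm_inv] using inv_anti₀ hm (hsphere w hw)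
  have hcne : h c ≠ 0 := hne c (mem_closedBall_self hr.le)
  rw [Pi.inv_apply, norm_inv, inv_le_inv₀ (norm_pos_iff.mpr hcne) hm] at hmax
  exact hmax.not_gt hc

theorem eventually_exists_zero_mem_closedBall {ι : Type*} {φ : Filter ι} {F : ι → ℂ → ℂ}
    {g : ℂ → ℂ} {c : ℂ} {r : ℝ} (hr : 0 < r) (hF : ∀ n, Differentiable ℂ (F n))
    (hFg : TendstoUniformlyOn F g φ (closedBall c r)) (hg : ContinuousOn g (sphere c r))
    (hgc : g c = 0) (hsphere : ∀ w ∈ sphere c r, g w ≠ 0) :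
    ∀ᶠ n in φ, ∃ w ∈ closedBall c r, F n w = 0 := by
  obtain ⟨m, hm, hgm⟩ : ∃ m > 0, ∀ w ∈ sphere c r, m ≤ ‖g w‖ :=
    (isCompact_sphere c r).exists_forall_le' (continuous_norm.comp_continuousOn hg)
      fun w hw => norm_pos_iff.mpr (hsphere w hw)
  filter_upwards [Metric.tendstoUniformlyOn_iff.mp hFg (m / 2) (half_pos hm)] with n hn
  refine exists_zero_mem_closedBall_of_norm_lt (hF n).diffContOnCl hr (m := m / 2) ?_
    fun w hw => ?_
  · simpa [hgc] using hn c (mem_closedBall_self hr.le)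
  · have hclose := hn w (sphere_subset_closedBall hw)
    rw [dist_eq_norm] at hclose
    linarith [hgm w hw, norm_sub_norm_le (g w) (F n w)]

/-- Hurwitz's theorem: being frequent along `φ ×ˢ 𝓝 c` means that, arbitrarily far along `φ`,
`F n` has zeros arbitrarily close to `c`. -/
theorem TendstoLocallyUniformly.frequently_prod_nhds_eq_zero {ι : Type*} {φ : Filter ι}
    [φ.NeBot] {F : ι → ℂ → ℂ} {g : ℂ → ℂ} {c : ℂ} (hFg : TendstoLocallyUniformly F g φ)
    (hF : ∀ n, Differentiable ℂ (F n)) (hg : Continuous g) (hgc : g c = 0)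
    (hiso : ∀ᶠ w in 𝓝[≠] c, g w ≠ 0) :
    ∃ᶠ q in φ ×ˢ 𝓝 c, F q.1 q.2 = 0 := by
  obtain ⟨ε, hε, hεiso⟩ := Metric.eventually_nhds_iff_ball.mp (eventually_nhdsWithin_iff.mp hiso)
  refine (φ.basis_sets.prod nhds_basis_closedBall).frequently_iff.mpr ?_
  rintro ⟨s, r⟩ ⟨hs, hr⟩
  set r' := min r (ε / 2)
  have hr' : 0 < r' := lt_min hr (half_pos hε)
  have hsphere (w : ℂ) (hw : w ∈ sphere c r') : g w ≠ 0 := by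
    refine hεiso w ?_ (ne_of_mem_sphere hw hr'.ne')
    rw [mem_ball, mem_sphere.mp hw]
    exact (min_le_right _ _).trans_lt (half_lt_self hε)
  have hunif : TendstoUniformlyOn F g φ (closedBall c r') :=
    (tendstoLocallyUniformlyOn_iff_tendstoUniformlyOn_of_compact (isCompact_closedBall c r')).mp
      hFg.tendstoLocallyUniformlyOn
  obtain ⟨n, ⟨w, hw, hFw⟩, hn⟩ :=
    ((eventually_exists_zero_mem_closedBall hr' hF hunif hg.continuousOn hgc hsphere).and hs).exists
  exact ⟨(n, w), ⟨hn, closedBall_subset_closedBall (min_le_left _ _) hw⟩, hFw⟩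

theorem stmt_8_general (k : ℕ) (hk : 1 ≤ k) (a : ℂ) (f : ℕ → ℂ → ℂ)
    (hf : ∀ n, Differentiable ℂ (f n))
    (z : ℕ → ℂ)
    (ρ : ℕ → ℝ) (hρpos : ∀ n, 0 < ρ n)
    (g : ℂ → ℂ) (hnc : ¬ ∃ c : ℂ, ∀ ζ, g ζ = c)
    (hconv : TendstoLocallyUniformly
      (fun n ζ => ((ρ n : ℂ) ^ k)⁻¹ * (f n (z n + (ρ n : ℂ) * ζ) - a)) g atTop)
    (hshare : ∀ n, ∀ w : ℂ, f n w = a → iteratedDeriv k (f n) w = a)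
    (ζ₀ : ℂ) (hζ₀ : g ζ₀ = 0) :
    iteratedDeriv k g ζ₀ = a := by
  set G : ℕ → ℂ → ℂ := fun n ζ => ((ρ n : ℂ) ^ k)⁻¹ * (f n (z n + (ρ n : ℂ) * ζ) - a)
  have hρ0 (n : ℕ) : (ρ n : ℂ) ≠ 0 := Complex.ofReal_ne_zero.mpr (hρpos n).ne'
  have hG (n : ℕ) : Differentiable ℂ (G n) := by fun_prop
  have hg : Differentiable ℂ g := differentiableOn_univ.mp <|
    (tendstoLocallyUniformlyOn_univ.mpr hconv).differentiableOn
      (Eventually.of_forall fun n => (hG n).differentiableOn) isOpen_univ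
  have hzeros : ∃ᶠ q in atTop ×ˢ 𝓝 ζ₀, G q.1 q.2 = 0 :=
    hconv.frequently_prod_nhds_eq_zero hG hg.continuous hζ₀ <|
      hg.eventually_ne_zero (fun h => hnc ⟨0, congrFun h⟩) ζ₀
  have hlim := (hconv.iteratedDeriv hG k).tendsto_prod_nhds
    (hg.contDiff.continuous_iteratedDeriv' k).continuousAt (x := ζ₀)
  refine tendsto_nhds_unique_of_frequently_eq hlim tendsto_const_nhds (hzeros.mono ?_)
  rintro ⟨n, w⟩ hGw
  have hfw : f n (z n + ρ n * w) = a :=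
    sub_eq_zero.mp ((mul_eq_zero.mp hGw).resolve_left (inv_ne_zero (pow_ne_zero k (hρ0 n))))
  rw [iteratedDeriv_rescale (hf n).contDiff hk _ _ (hρ0 n)]
  exact hshare n _ hfw

/-- Zalcman rescaling step: if `gₙ(ζ) = ρₙ⁻ᵏ (fₙ(zₙ + ρₙ ζ) - a)` converges locally
uniformly to a nonconstant entire `g`, each `fₙ` is entire, and `fₙ(z) = a` implies
`fₙ^{(k)}(z) = a`, then a zero `ζ₀` of `g` satisfies `g^{(k)}(ζ₀) = a`. -/
theorem stmt_8 (k : ℕ) (hk : 1 ≤ k) (a : ℂ) (f : ℕ → ℂ → ℂ)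
    (hf : ∀ n, Differentiable ℂ (f n))
    (z : ℕ → ℂ) (z₀ : ℂ) (hz : Tendsto z atTop (nhds z₀))
    (ρ : ℕ → ℝ) (hρpos : ∀ n, 0 < ρ n) (hρ : Tendsto ρ atTop (nhds 0))
    (g : ℂ → ℂ) (hg : Differentiable ℂ g) (hnc : ¬ ∃ c : ℂ, ∀ ζ, g ζ = c)
    (hconv : TendstoLocallyUniformly
      (fun n ζ => ((ρ n : ℂ) ^ k)⁻¹ * (f n (z n + (ρ n : ℂ) * ζ) - a)) g atTop)
    (hshare : ∀ n, ∀ w : ℂ, f n w = a → iteratedDeriv k (f n) w = a)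
    (ζ₀ : ℂ) (hζ₀ : g ζ₀ = 0) :
    iteratedDeriv k g ζ₀ = a :=
  stmt_8_general k hk a f hf z ρ hρpos g hnc hconv hshare ζ₀ hζ₀
end

section
/- For f_n(z) = e^{nz} - z^{k-1}/n^k + z^{k-1}, the spherical derivatives f_n^#(0) are unbounded as n → ∞ for k ≥ 2, and more generally sup over any neighborhood of 0 of f_n^# tends to infinity; hence by Marty's criterion the family {f_n} is not normal at 0. -/
open Filter

set_option maxHeartbeats 1000000 in
private lemma stmt16_aux (k : ℕ) (hk : 1 ≤ k) (f : ℕ → ℂ → ℂ)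
    (hf : ∀ n : ℕ, ∀ z : ℂ, f n z =
      Complex.exp (((n : ℂ) + 1) * z) - z ^ (k - 1) / ((n : ℂ) + 1) ^ k + z ^ (k - 1)) :
    Tendsto (fun n : ℕ => ‖deriv (f n) 0‖ / (1 + ‖f n 0‖ ^ 2)) atTop atTop := by
  have key : ∀ n : ℕ, ((n : ℝ) + 1 - 2 * k) / 10 ≤ ‖deriv (f n) 0‖ / (1 + ‖f n 0‖ ^ 2) := by
    intro n
    set a : ℂ := (n : ℂ) + 1 with ha
    have hna : ‖a‖ = (n : ℝ) + 1 := by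
      rw [ha, show (n : ℂ) + 1 = ((n + 1 : ℕ) : ℂ) by push_cast; ring,
        Complex.norm_natCast]
      push_cast; ring
    have hfeq : f n = fun z : ℂ => Complex.exp (a * z) - z ^ (k - 1) / a ^ k + z ^ (k - 1) :=
      funext (hf n)
    have hz1 : ‖(0 : ℂ) ^ (k - 1)‖ ≤ 1 := by
      rw [norm_pow, norm_zero]; exact zero_pow_le_one _
    have hz2 : ‖(0 : ℂ) ^ (k - 1 - 1)‖ ≤ 1 := by
      rw [norm_pow, norm_zero]; exact zero_pow_le_one _
    have hak : (1 : ℝ) ≤ ‖a ^ k‖ := by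
      rw [norm_pow, hna]
      exact one_le_pow₀ (le_add_of_nonneg_left (Nat.cast_nonneg n))
    have e1 : ‖(0:ℂ) ^ (k-1) / a ^ k‖ ≤ 1 := by
      rw [norm_div]
      calc ‖(0:ℂ) ^ (k-1)‖ / ‖a ^ k‖ ≤ 1 / 1 :=
            div_le_div₀ one_pos.le hz1 one_pos hak
        _ = 1 := by norm_num
    have hf0 : ‖f n 0‖ ≤ 3 := by
      rw [hfeq]
      simp only [mul_zero, Complex.exp_zero]
      have t1 := norm_add_le (1 - (0:ℂ) ^ (k-1) / a ^ k) ((0:ℂ) ^ (k-1))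
      have t2 := norm_sub_le (1:ℂ) ((0:ℂ) ^ (k-1) / a ^ k)
      rw [norm_one] at t2
      linarith
    have hd : HasDerivAt (f n)
        (Complex.exp (a * 0) * (a * 1) - (↑(k-1) * (0:ℂ) ^ (k-1-1)) / a ^ k
          + ↑(k-1) * (0:ℂ) ^ (k-1-1)) 0 := by
      rw [hfeq]
      exact (((Complex.hasDerivAt_exp (a * 0)).comp 0
        ((hasDerivAt_id (0:ℂ)).const_mul a)).sub
        ((hasDerivAt_pow (k-1) 0).div_const _)).add (hasDerivAt_pow (k-1) 0)
    have hdval : deriv (f n) 0 =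
        a - (↑(k-1) * (0:ℂ) ^ (k-1-1)) / a ^ k + ↑(k-1) * (0:ℂ) ^ (k-1-1) := by
      rw [hd.deriv]
      simp [mul_zero, Complex.exp_zero]
    have hc : ‖(↑(k-1) : ℂ) * (0:ℂ) ^ (k-1-1)‖ ≤ (k : ℝ) := by
      rw [norm_mul]
      calc ‖((k-1 : ℕ) : ℂ)‖ * ‖(0:ℂ) ^ (k-1-1)‖
          ≤ ‖((k-1 : ℕ) : ℂ)‖ * 1 :=
            mul_le_mul_of_nonneg_left hz2 (norm_nonneg _)
        _ = ((k-1 : ℕ) : ℝ) := by rw [mul_one, Complex.norm_natCast]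
        _ ≤ (k : ℝ) := Nat.cast_le.mpr (Nat.sub_le k 1)
    set c : ℂ := (↑(k-1) : ℂ) * (0:ℂ) ^ (k-1-1) with hcdef
    have hck : ‖c‖ / ‖a ^ k‖ ≤ (k : ℝ) := by
      calc ‖c‖ / ‖a ^ k‖ ≤ (k : ℝ) / 1 :=
            div_le_div₀ (Nat.cast_nonneg k) hc one_pos hak
        _ = (k : ℝ) := by norm_num
    have hdlow : (n : ℝ) + 1 - 2 * k ≤ ‖deriv (f n) 0‖ := by
      rw [hdval]
      have t1 := norm_add_le (a - c / a ^ k + c) (-c)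
      simp only [add_neg_cancel_right, norm_neg] at t1
      have t2 := norm_sub_norm_le a (a - c / a ^ k)
      have t3 : ‖a - (a - c / a ^ k)‖ = ‖c‖ / ‖a ^ k‖ := by
        rw [show a - (a - c / a ^ k) = c / a ^ k by ring, norm_div]
      rw [t3] at t2
      rw [hna] at t2
      linarith
    have hden : 1 + ‖f n 0‖ ^ 2 ≤ 10 := by nlinarith [norm_nonneg (f n 0)]
    have hdenpos : (0 : ℝ) < 1 + ‖f n 0‖ ^ 2 := by positivity
    exact div_le_div₀ (norm_nonneg _) hdlow hdenpos hden
  have h1 : Tendsto (fun n : ℕ => ((n : ℝ) + (1 - 2 * k)) / 10) atTop atTop :=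
    (tendsto_atTop_add_const_right _ _
      tendsto_natCast_atTop_atTop).atTop_div_const (by norm_num)
  have h2 : (fun n : ℕ => ((n : ℝ) + 1 - 2 * k) / 10)
      = fun n : ℕ => ((n : ℝ) + (1 - 2 * k)) / 10 := by funext n; ring
  exact tendsto_atTop_mono key (h2 ▸ h1)

/-- For `f_n(z) = e^{nz} - z^{k-1}/n^k + z^{k-1}` (n ≥ 1): if `k ≥ 2` the spherical
derivatives `f_n^#(0)` tend to infinity, and for every neighborhood `U` of `0` the
supremum of `f_n^#` over `U` tends to infinity (so by Marty's criterion the family is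
not normal at `0`). -/
theorem stmt_16 (k : ℕ) (hk : 1 ≤ k) (f : ℕ → ℂ → ℂ)
    (hf : ∀ n : ℕ, ∀ z : ℂ, f n z =
      Complex.exp (((n : ℂ) + 1) * z) - z ^ (k - 1) / ((n : ℂ) + 1) ^ k + z ^ (k - 1)) :
    (2 ≤ k → Tendsto (fun n : ℕ => ‖deriv (f n) 0‖ / (1 + ‖f n 0‖ ^ 2)) atTop atTop) ∧
    (∀ U ∈ nhds (0 : ℂ), ∀ M : ℝ, ∀ᶠ n : ℕ in atTop,
      ∃ z ∈ U, M ≤ ‖deriv (f n) z‖ / (1 + ‖f n z‖ ^ 2)) := by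
  have main := stmt16_aux k hk f hf
  refine ⟨fun _ => main, fun U hU M => ?_⟩
  filter_upwards [main.eventually_ge_atTop M] with n hn
  exact ⟨0, mem_of_mem_nhds hU, hn⟩
end
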